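/- Let Z be a finite ep-metric space in which each x ∈ Z has a fixed complete neighbourhood N_x = Z(x, r_x), and suppose t ≥ S ≥ r_x for all x ∈ Z. Then the inclusion V_S(N) ⊆ V_t(N) of neighbourhood complexes induces a bijection π₀V_S(N) → π₀V_t(N); that is, two points of Z joined by a chain whose consecutive pairs lie in a common neighbourhood N_w and are at distance ≤ t are already joined by such a chain with consecutive distances ≤ S. -/

import Mathlib

open scoped ENNReal

/-- Edge relation of the neighbourhood complex `V_t(N)` for the system of
complete neighbourhoods `N_x = Z(x, r_x)`: pairs `{a,b}`, `a ≠ b`, with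
`d(a,b) ≤ t` and `{a,b} ⊆ N_w` for some `w`. -/
def rnRel {Z : Type*} [PseudoEMetricSpace Z] (r : Z → ℝ≥0∞) (t : ℝ≥0∞)
    (a b : Z) : Prop :=
  a ≠ b ∧ edist a b ≤ t ∧ ∃ w : Z, edist w a ≤ r w ∧ edist w b ≤ r w

/-! Any edge `{a, b} ⊆ N_w` of `V_t(N)` is replaced by the path `a — w — b`, whose two edges
have length at most `r_w ≤ S`, since they join points of `N_w` to its centre. -/

open Relation

namespace rnRel

variable {Z : Type*} [PseudoEMetricSpace Z] {r : Z → ℝ≥0∞} {s t : ℝ≥0∞}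

instance : Std.Symm (rnRel r t) where
  symm a b := fun ⟨hne, hd, w, ha, hb⟩ => ⟨hne.symm, edist_comm a b ▸ hd, w, hb, ha⟩

theorem mono (hst : s ≤ t) {a b : Z} (h : rnRel r s a b) : rnRel r t a b :=
  ⟨h.1, h.2.1.trans hst, h.2.2⟩

theorem reflTransGen_center {w b : Z} (hb : edist w b ≤ r w) :
    ReflTransGen (rnRel r (r w)) w b := by
  by_cases hwb : w = b
  · exact hwb ▸ .refl
  · exact .single ⟨hwb, hb, w, by simp, hb⟩

theorem reflTransGen_of_mem_nbhd {w a b : Z} (ha : edist w a ≤ r w) (hb : edist w b ≤ r w)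
    (hw : r w ≤ t) : ReflTransGen (rnRel r t) a b :=
  ReflTransGen.mono (fun _ _ => mono hw) _ _ <|
    (symm (reflTransGen_center ha)).trans (reflTransGen_center hb)

end rnRel

theorem nbhd_complex_pi0_stable_general {Z : Type*} [PseudoEMetricSpace Z]
    (r : Z → ℝ≥0∞)
    (S t : ℝ≥0∞) (hr : ∀ x : Z, r x ≤ S) (hSt : S ≤ t) :
    ∀ u v : Z,
      Relation.ReflTransGen (rnRel r S) u v ↔
        Relation.ReflTransGen (rnRel r t) u v := by
  intro u v
  refine ⟨ReflTransGen.mono (fun _ _ => rnRel.mono hSt) u v, ReflTransGen.lift' id ?_ u v⟩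
  rintro a b ⟨-, -, w, ha, hb⟩
  exact rnRel.reflTransGen_of_mem_nbhd ha hb (hr w)

/-- Corollary 21: let `Z` be a finite ep-metric space with a fixed complete
neighbourhood `N_x = Z(x, r_x)` for each `x` (all distances within the balls
being finite), and suppose `t ≥ S ≥ r_x` for all `x`.  Then the inclusion
`V_S(N) ⊆ V_t(N)` induces a bijection `π₀V_S(N) → π₀V_t(N)`: two points joined
by a chain whose consecutive pairs lie in a common neighbourhood `N_w` and are
at distance `≤ t` are already joined by such a chain with consecutive
distances `≤ S`. -/
theorem nbhd_complex_pi0_stable {Z : Type*} [Fintype Z] [PseudoEMetricSpace Z]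
    (r : Z → ℝ≥0∞) (hfin : ∀ x y : Z, edist x y ≤ r x → edist x y < ⊤)
    (S t : ℝ≥0∞) (ht : t ≠ ⊤) (hr : ∀ x : Z, r x ≤ S) (hSt : S ≤ t) :
    ∀ u v : Z,
      Relation.ReflTransGen (rnRel r S) u v ↔
        Relation.ReflTransGen (rnRel r t) u v :=
  nbhd_complex_pi0_stable_general r S t hr hSt
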